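/- arXiv:1702.03792 — 5 statements merged into one kernel-verified Lean document; each statement's English description precedes it below -/
import Mathlib

section
/- Let N ≥ 1, let Ω be an open subset of ℝ^N, let r ≥ 1 and let p ∈ [1, r]. Suppose (u_n) is a sequence in L^r(Ω) that converges weakly in L^r(Ω) to some u ∈ L^r(Ω) (i.e. ∫_Ω u_n g dx → ∫_Ω u g dx for every g in the conjugate Lebesgue space L^{r'}(Ω)) and that u_n → u almost everywhere in Ω. Then |u_n|^p − |u_n − u|^p − |u|^p → 0 strongly in L^{r/p}(Ω), i.e. ∫_Ω ||u_n|^p − |u_n − u|^p − |u|^p|^{r/p} dx → 0 as n → ∞. -/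
open MeasureTheory Filter Real
open scoped ENNReal Topology

/-!
Weak convergence in `L^r` only enters through the uniform boundedness principle: the functionals
`g ↦ ∫ uₙ g` on `L^{r'}` are pointwise bounded, hence bounded in norm, and testing against
`g = sign(uₙ) |uₙ|^{r-1}` shows that `‖uₙ‖_r` is at most the norm of that functional.

The rest is the Brezis–Lieb argument. Convexity of `t ↦ t^p` gives, for every `ε > 0`, a constant
`C_ε` with `||a|^p - |a - b|^p - |b|^p|^{r/p} ≤ ε |a - b|^r + C_ε |b|^r`. The positive part of
`||uₙ|^p - |uₙ - u|^p - |u|^p|^{r/p} - ε |uₙ - u|^r` is dominated by `C_ε |u|^r` and tends to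
`0` a.e., so its integral tends to `0`; what is left is at most `ε sup ‖uₙ - u‖_r^r`.
-/

theorem add_rpow_le_of_add_eq_one {p s t x y : ℝ} (hp : 1 ≤ p) (hs : 0 < s) (ht : 0 < t)
    (hst : s + t = 1) (hx : 0 ≤ x) (hy : 0 ≤ y) :
    (x + y) ^ p ≤ s ^ (1 - p) * x ^ p + t ^ (1 - p) * y ^ p := by
  have key := (convexOn_rpow hp).2 (Set.mem_Ici.2 (div_nonneg hx hs.le))
    (Set.mem_Ici.2 (div_nonneg hy ht.le)) hs.le ht.le hst
  simp only [smul_eq_mul, mul_div_cancel₀ _ hs.ne', mul_div_cancel₀ _ ht.ne'] at key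
  calc (x + y) ^ p ≤ s * (x / s) ^ p + t * (y / t) ^ p := key
    _ = s ^ (1 - p) * x ^ p + t ^ (1 - p) * y ^ p := by
        rw [div_rpow hx hs.le, div_rpow hy ht.le, rpow_sub hs, rpow_sub ht, rpow_one, rpow_one]
        ring

theorem abs_rpow_sub_rpow_le {p s x y z : ℝ} (hp : 1 ≤ p) (hs : s ∈ Set.Ioo 0 1)
    (hx : 0 ≤ x) (hy : 0 ≤ y) (hz : 0 ≤ z) (hxy : x ≤ y + z) (hyx : y ≤ x + z) :
    |x ^ p - y ^ p| ≤ ((1 - s) ^ (1 - p) - 1) * y ^ p + s ^ (1 - p) * z ^ p := by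
  obtain ⟨hs0, hs1⟩ := hs
  set t := (1 - s) ^ (1 - p)
  have ht : 1 ≤ t := one_le_rpow_of_pos_of_le_one_of_nonpos (by linarith) (by linarith)
    (by linarith)
  have hp0 : 0 ≤ p := by linarith
  have hxp : x ^ p ≤ t * y ^ p + s ^ (1 - p) * z ^ p :=
    (rpow_le_rpow hx hxy hp0).trans
      (add_rpow_le_of_add_eq_one hp (by linarith) hs0 (by ring) hy hz)
  have hyp : y ^ p ≤ t * x ^ p + s ^ (1 - p) * z ^ p :=
    (rpow_le_rpow hy hyx hp0).trans
      (add_rpow_le_of_add_eq_one hp (by linarith) hs0 (by ring) hx hz)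
  have := rpow_nonneg hx p
  have := rpow_nonneg hy p
  have := mul_nonneg (rpow_nonneg hs0.le (1 - p)) (rpow_nonneg hz p)
  rw [abs_le]
  constructor <;> nlinarith

theorem exists_abs_rpow_sub_rpow_sub_rpow_le {p r ε : ℝ} (hp : 1 ≤ p) (hpr : p ≤ r)
    (hε : 0 < ε) :
    ∃ C, ∀ a b : ℝ,
      |(|a| ^ p - |a - b| ^ p - |b| ^ p)| ^ (r / p) ≤ ε * |a - b| ^ r + C * |b| ^ r := by
  set q := r / p
  have hp0 : 0 < p := by linarith
  have hq : 1 ≤ q := (one_le_div hp0).2 hpr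
  have hpq : p * q = r := mul_div_cancel₀ r hp0.ne'
  set K : ℝ := (1 / 2) ^ (1 - q)
  have hsmall : Tendsto (fun s : ℝ => K * ((1 - s) ^ (1 - p) - 1) ^ q) (𝓝 0) (𝓝 0) := by
    have hc : ContinuousAt (fun s : ℝ => K * ((1 - s) ^ (1 - p) - 1) ^ q) 0 := by
      fun_prop (disch := first | exact Or.inr (zero_le_one.trans hq) | norm_num)
    simpa [zero_rpow (zero_lt_one.trans_le hq).ne'] using hc.tendsto
  obtain ⟨s, hsε, hs⟩ := ((hsmall.mono_left nhdsWithin_le_nhds).eventually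
    (gt_mem_nhds hε)).and (Ioo_mem_nhdsGT one_pos) |>.exists
  set δ := (1 - s) ^ (1 - p) - 1
  set c := s ^ (1 - p) + 1
  have hδ : 0 ≤ δ := sub_nonneg.2 <| one_le_rpow_of_pos_of_le_one_of_nonpos
    (by linarith [hs.2]) (by linarith [hs.1]) (by linarith)
  have hc : 0 ≤ c := add_nonneg (rpow_nonneg hs.1.le _) zero_le_one
  refine ⟨K * c ^ q, fun a b => ?_⟩
  have hy := abs_nonneg (a - b)
  have hz := abs_nonneg b
  have hlin : |(|a| ^ p - |a - b| ^ p - |b| ^ p)| ≤ δ * |a - b| ^ p + c * |b| ^ p := by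
    have h := abs_rpow_sub_rpow_le hp hs (abs_nonneg a) hy hz
      (by simpa using abs_add_le (a - b) b) (abs_sub a b)
    have hzp := rpow_nonneg hz p
    rw [abs_le] at h ⊢
    constructor <;> linarith [h.1, h.2]
  have hpow (k w : ℝ) (hk : 0 ≤ k) (hw : 0 ≤ w) : (k * w ^ p) ^ q = k ^ q * w ^ r := by
    rw [mul_rpow hk (rpow_nonneg hw p), ← rpow_mul hw, hpq]
  calc |(|a| ^ p - |a - b| ^ p - |b| ^ p)| ^ q
      ≤ (δ * |a - b| ^ p + c * |b| ^ p) ^ q := rpow_le_rpow (abs_nonneg _) hlin (by linarith)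
    _ ≤ K * (δ * |a - b| ^ p) ^ q + K * (c * |b| ^ p) ^ q :=
        add_rpow_le_of_add_eq_one hq (by norm_num) (by norm_num) (by norm_num)
          (by positivity) (by positivity)
    _ = K * δ ^ q * |a - b| ^ r + K * c ^ q * |b| ^ r := by
        rw [hpow δ _ hδ hy, hpow c _ hc hz]; ring
    _ ≤ ε * |a - b| ^ r + K * c ^ q * |b| ^ r := by
        gcongr

theorem integral_norm_rpow_eq_lpNorm_rpow {α E : Type*} [MeasurableSpace α] {μ : Measure α}
    [NormedAddCommGroup E] {p : ℝ≥0∞} {f : α → E} (hp0 : p ≠ 0) (hp : p ≠ ∞)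
    (hf : AEStronglyMeasurable f μ) :
    ∫ x, ‖f x‖ ^ p.toReal ∂μ = lpNorm f p μ ^ p.toReal := by
  rw [lpNorm_eq_integral_norm_rpow_toReal hp0 hp hf, rpow_inv_rpow (by positivity)
    (ENNReal.toReal_pos hp0 hp).ne']

section Duality

variable {α : Type*} [MeasurableSpace α] {μ : Measure α} {p q : ℝ≥0∞} [p.HolderConjugate q]

theorem eLpNorm_abs_rpow_sub_one_le (hp : p ≠ ∞) (f : α → ℝ) :
    eLpNorm (fun x => |f x| ^ (p.toReal - 1)) q μ ≤ eLpNorm f p μ ^ (p.toReal - 1) := by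
  rcases eq_or_ne p 1 with rfl | hp1
  · rw [(ENNReal.HolderConjugate.eq_top_iff_eq_one q 1).2 rfl]
    simpa using eLpNorm_le_of_ae_bound (μ := μ) (p := ∞)
      (f := fun _ : α => (1 : ℝ)) (C := 1) (.of_forall fun _ => by simp)
  have hq : q ≠ ∞ := (ENNReal.HolderConjugate.ne_top_iff_ne_one q p).2 hp1
  have hP : 1 < p.toReal := by
    have := ENNReal.HolderConjugate.one_le p q
    exact (ENNReal.toReal_lt_toReal ENNReal.one_ne_top hp).2 (lt_of_le_of_ne this hp1.symm)
  have hconj := ENNReal.HolderConjugate.toReal_of_ne_top hp hq (p := p) (q := q)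
  have hexp : q * ENNReal.ofReal (p.toReal - 1) = p := by
    rw [← ENNReal.ofReal_toReal hq, ← ENNReal.ofReal_mul ENNReal.toReal_nonneg, mul_comm,
      hconj.sub_one_mul_conj, ENNReal.ofReal_toReal hp]
  simpa only [Real.norm_eq_abs, hexp] using
    (eLpNorm_norm_rpow f (sub_pos.2 hP) (p := q) (μ := μ)).le

theorem lpNorm_le_of_abs_integral_mul_le (hp : p ≠ ∞) {f : α → ℝ} (hf : MemLp f p μ) {C : ℝ}
    (hC0 : 0 ≤ C) (hC : ∀ g, MemLp g q μ → |∫ x, f x * g x ∂μ| ≤ C * lpNorm g q μ) :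
    lpNorm f p μ ≤ C := by
  set P := p.toReal
  have hP : 1 ≤ P := by
    simpa using ENNReal.toReal_mono hp (ENNReal.HolderConjugate.one_le p q)
  -- `f |f|^(P-2) = sign f |f|^(P-1)` is the extremal function of Hölder's inequality
  set g : α → ℝ := fun x => f x * |f x| ^ (P - 2)
  have hfg (x) : f x * g x = |f x| ^ P := by
    rw [← mul_assoc, ← abs_mul_abs_self, ← sq, ← rpow_two,
      ← rpow_add' (abs_nonneg _) (by linarith), add_sub_cancel]
  have hg_le (x) : ‖g x‖ ≤ |f x| ^ (P - 1) := by
    rw [Real.norm_eq_abs, abs_mul, abs_of_nonneg (rpow_nonneg (abs_nonneg _) _)]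
    rcases eq_or_ne (f x) 0 with h | h
    · simpa [h] using rpow_nonneg le_rfl _
    · rw [show P - 1 = 1 + (P - 2) by ring, rpow_add (abs_pos.2 h), rpow_one]
  have hf_meas := hf.1.aemeasurable
  have hmajor : MemLp (fun x => |f x| ^ (P - 1)) q μ :=
    ⟨(by fun_prop : AEMeasurable _ μ).aestronglyMeasurable,
      (eLpNorm_abs_rpow_sub_one_le hp f).trans_lt
        (ENNReal.rpow_lt_top_of_nonneg (by linarith) hf.eLpNorm_ne_top)⟩
  have hg : MemLp g q μ :=
    hmajor.of_le (by fun_prop : AEMeasurable g μ).aestronglyMeasurable <| .of_forall fun x => by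
      simpa [abs_of_nonneg (rpow_nonneg (abs_nonneg (f x)) _)] using hg_le x
  have hg_norm : lpNorm g q μ ≤ lpNorm f p μ ^ (P - 1) := by
    rw [← toReal_eLpNorm hg.1, ← toReal_eLpNorm hf.1, ENNReal.toReal_rpow]
    exact ENNReal.toReal_mono (ENNReal.rpow_ne_top_of_nonneg (by linarith) hf.eLpNorm_ne_top)
      ((eLpNorm_mono_real hg_le).trans (eLpNorm_abs_rpow_sub_one_le hp f))
  have hL : lpNorm f p μ ^ P = ∫ x, f x * g x ∂μ := by
    rw [← integral_norm_rpow_eq_lpNorm_rpow (ENNReal.HolderConjugate.ne_zero p q) hp hf.1]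
    simp_rw [hfg, Real.norm_eq_abs]
    rfl
  have hkey : lpNorm f p μ * lpNorm f p μ ^ (P - 1) ≤ C * lpNorm f p μ ^ (P - 1) :=
    calc lpNorm f p μ * lpNorm f p μ ^ (P - 1) = lpNorm f p μ ^ P := by
          rw [mul_comm, ← rpow_add_one' lpNorm_nonneg (by linarith), sub_add_cancel]
      _ = ∫ x, f x * g x ∂μ := hL
      _ ≤ |∫ x, f x * g x ∂μ| := le_abs_self _
      _ ≤ C * lpNorm g q μ := hC g hg
      _ ≤ C * lpNorm f p μ ^ (P - 1) := by gcongr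
  rcases (lpNorm_nonneg (f := f) (p := p) (μ := μ)).eq_or_lt with hL0 | hL0
  · exact hL0 ▸ hC0
  · exact le_of_mul_le_mul_right hkey (rpow_pos_of_pos hL0 _)

theorem exists_lpNorm_le_of_forall_bddAbove (hp : p ≠ ∞) {ι : Type*}
    {u : ι → α → ℝ} (hu : ∀ i, MemLp (u i) p μ)
    (hbdd : ∀ g, MemLp g q μ → BddAbove (Set.range fun i => |∫ x, u i x * g x ∂μ|)) :
    ∃ C, ∀ i, lpNorm (u i) p μ ≤ C := by
  have : Fact (1 ≤ p) := ⟨ENNReal.HolderConjugate.one_le p q⟩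
  have : Fact (1 ≤ q) := ⟨ENNReal.HolderConjugate.one_le q p⟩
  let T (i : ι) : Lp ℝ q μ →L[ℝ] ℝ :=
    (ContinuousLinearMap.mul ℝ ℝ).lpPairing μ p q (hu i).toLp
  have hT (i) {g : α → ℝ} (g' : Lp ℝ q μ) (hg : g' =ᵐ[μ] g) :
      T i g' = ∫ x, u i x * g x ∂μ := by
    rw [ContinuousLinearMap.lpPairing_eq_integral]
    exact integral_congr_ae (((hu i).coeFn_toLp).mp (hg.mono fun x hg hu => by simp [hg, hu]))
  obtain ⟨C, hC⟩ := banach_steinhaus (g := T) fun g => by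
    simpa [hT _ g .rfl, bddAbove_def] using hbdd g (Lp.memLp g)
  refine ⟨max C 0, fun i =>
    lpNorm_le_of_abs_integral_mul_le (q := q) hp (hu i) (le_max_right _ _) fun g hg => ?_⟩
  calc |∫ x, u i x * g x ∂μ| = ‖T i (hg.toLp g)‖ := by
        rw [hT i _ hg.coeFn_toLp, Real.norm_eq_abs]
    _ ≤ ‖T i‖ * ‖hg.toLp g‖ := (T i).le_opNorm _
    _ ≤ max C 0 * lpNorm g q μ := by
        rw [Lp.norm_toLp, toReal_eLpNorm hg.1]
        gcongr
        · exact lpNorm_nonneg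
        · exact (hC i).trans (le_max_left _ _)

end Duality

theorem tendsto_integral_of_le_mul_add {α : Type*} [MeasurableSpace α] {μ : Measure α}
    {F G : ℕ → α → ℝ} {H : α → ℝ} {M : ℝ} (hF_nonneg : ∀ n x, 0 ≤ F n x)
    (hF_meas : ∀ n, AEStronglyMeasurable (F n) μ)
    (hF_lim : ∀ᵐ x ∂μ, Tendsto (fun n => F n x) atTop (𝓝 0))
    (hG_nonneg : ∀ n x, 0 ≤ G n x) (hG : ∀ n, Integrable (G n) μ)
    (hG_le : ∀ n, ∫ x, G n x ∂μ ≤ M) (hH : Integrable H μ)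
    (hFG : ∀ ε > 0, ∃ C, ∀ n x, F n x ≤ ε * G n x + C * H x) :
    Tendsto (fun n => ∫ x, F n x ∂μ) atTop (𝓝 0) := by
  refine tendsto_order.2 ⟨fun a ha => .of_forall fun n => ha.trans_le <|
    integral_nonneg (hF_nonneg n), fun a ha => ?_⟩
  have hεM : Tendsto (fun ε : ℝ => ε * M) (𝓝[>] 0) (𝓝 0) := by
    simpa using ((tendsto_id (x := 𝓝 (0 : ℝ))).mul_const M).mono_left nhdsWithin_le_nhds
  obtain ⟨ε, hεM, hε⟩ :=
    ((hεM.eventually (gt_mem_nhds (half_pos ha))).and self_mem_nhdsWithin).exists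
  obtain ⟨C, hC⟩ := hFG ε hε
  -- the part of `F n` not controlled by `ε * G n` is dominated by `C * H` and tends to zero
  set h : ℕ → α → ℝ := fun n x => max (F n x - ε * G n x) 0
  have h_nonneg (n x) : 0 ≤ h n x := le_max_right _ _
  have h_le (n x) : ‖h n x‖ ≤ ‖C * H x‖ := by
    rw [Real.norm_eq_abs, abs_of_nonneg (h_nonneg n x)]
    exact max_le ((sub_le_iff_le_add'.2 (hC n x)).trans (le_norm_self _)) (norm_nonneg _)
  have h_meas (n) : AEStronglyMeasurable (h n) μ :=
    ((hF_meas n).sub ((hG n).1.const_mul ε)).sup aestronglyMeasurable_const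
  have h_int (n) : Integrable (h n) μ :=
    (hH.const_mul C).norm.mono' (h_meas n) (.of_forall (h_le n))
  have h_lim : Tendsto (fun n => ∫ x, h n x ∂μ) atTop (𝓝 0) := by
    simpa using tendsto_integral_of_dominated_convergence _ h_meas (hH.const_mul C).norm
      (fun n => .of_forall (h_le n)) <| hF_lim.mono fun x hx =>
        tendsto_of_tendsto_of_tendsto_of_le_of_le tendsto_const_nhds hx (h_nonneg · x)
          fun n => max_le (by linarith [mul_nonneg hε.le (hG_nonneg n x)])
            (hF_nonneg n x)
  filter_upwards [h_lim.eventually (gt_mem_nhds (half_pos ha))] with n hn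
  calc ∫ x, F n x ∂μ ≤ ∫ x, h n x + ε * G n x ∂μ :=
        integral_mono_of_nonneg (.of_forall (hF_nonneg n)) ((h_int n).add ((hG n).const_mul ε))
          (.of_forall fun x => sub_le_iff_le_add.1 (le_max_left _ _))
    _ = ∫ x, h n x ∂μ + ε * ∫ x, G n x ∂μ := by
        rw [integral_add (h_int n) ((hG n).const_mul ε), integral_const_mul]
    _ ≤ ∫ x, h n x ∂μ + ε * M := by gcongr; exact hG_le n
    _ < a := by linarith

theorem tendsto_integral_abs_rpow_sub_rpow_sub_rpow {α : Type*} [MeasurableSpace α]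
    {μ : Measure α} {p r C : ℝ} (hp : 1 ≤ p) (hpr : p ≤ r) {u : ℕ → α → ℝ} {v : α → ℝ}
    (hu : ∀ n, MemLp (u n) (ENNReal.ofReal r) μ) (hv : MemLp v (ENNReal.ofReal r) μ)
    (hC : ∀ n, lpNorm (u n) (ENNReal.ofReal r) μ ≤ C)
    (hae : ∀ᵐ x ∂μ, Tendsto (fun n => u n x) atTop (𝓝 (v x))) :
    Tendsto (fun n => ∫ x, |(|u n x| ^ p - |u n x - v x| ^ p - |v x| ^ p)| ^ (r / p) ∂μ)
      atTop (𝓝 0) := by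
  have hr : 0 < r := by linarith
  have hr0 : ENNReal.ofReal r ≠ 0 := by simpa using hr
  have hr1 : 1 ≤ ENNReal.ofReal r := by simpa using hp.trans hpr
  have hint {f : α → ℝ} (hf : MemLp f (ENNReal.ofReal r) μ) :
      Integrable (fun x => |f x| ^ r) μ := by
    simpa [ENNReal.toReal_ofReal hr.le] using hf.integrable_norm_rpow hr0 ENNReal.ofReal_ne_top
  have hφ : Continuous fun z : ℝ × ℝ =>
      |(|z.1| ^ p - |z.1 - z.2| ^ p - |z.2| ^ p)| ^ (r / p) := by
    fun_prop (disch := positivity)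
  refine tendsto_integral_of_le_mul_add (G := fun n x => |u n x - v x| ^ r)
    (H := fun x => |v x| ^ r) (M := (C + lpNorm v (ENNReal.ofReal r) μ) ^ r)
    (fun n x => by positivity) (fun n => ?_) ?_ (fun n x => by positivity)
    (fun n => hint ((hu n).sub hv)) (fun n => ?_) (hint hv)
    fun ε hε => (exists_abs_rpow_sub_rpow_sub_rpow_le hp hpr hε).imp fun _ h n x => h _ _
  · have := (hu n).1.aemeasurable
    have := hv.1.aemeasurable
    exact (by fun_prop : AEMeasurable _ μ).aestronglyMeasurable
  · filter_upwards [hae] with x hx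
    have hq : r / p ≠ 0 := (div_pos hr (by linarith)).ne'
    simpa [Function.comp_def, zero_rpow (by linarith : p ≠ 0), zero_rpow hq] using
      (hφ.tendsto (v x, v x)).comp (hx.prodMk_nhds tendsto_const_nhds)
  · have h := integral_norm_rpow_eq_lpNorm_rpow hr0 ENNReal.ofReal_ne_top ((hu n).sub hv).1
    simp only [Pi.sub_apply, Real.norm_eq_abs, ENNReal.toReal_ofReal hr.le] at h
    rw [h]
    gcongr
    · exact lpNorm_nonneg
    · exact (lpNorm_sub_le (hu n) hr1).trans (add_le_add_left (hC n) _)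

theorem brezis_lieb_type_general
    {N : ℕ} (Ω : Set (EuclideanSpace ℝ (Fin N)))
    (r p : ℝ) (hp : p ∈ Set.Icc 1 r)
    (u : ℕ → EuclideanSpace ℝ (Fin N) → ℝ) (v : EuclideanSpace ℝ (Fin N) → ℝ)
    (hu : ∀ n, MemLp (u n) (ENNReal.ofReal r) (volume.restrict Ω))
    (hv : MemLp v (ENNReal.ofReal r) (volume.restrict Ω))
    (r' : ℝ≥0∞) (hr' : 1 / ENNReal.ofReal r + 1 / r' = 1)
    (hweak : ∀ g : EuclideanSpace ℝ (Fin N) → ℝ, MemLp g r' (volume.restrict Ω) →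
      Tendsto (fun n => ∫ x in Ω, u n x * g x) atTop (nhds (∫ x in Ω, v x * g x)))
    (hae : ∀ᵐ x ∂(volume.restrict Ω), Tendsto (fun n => u n x) atTop (nhds (v x))) :
    Tendsto
      (fun n => ∫ x in Ω, |(|u n x| ^ p - |u n x - v x| ^ p - |v x| ^ p)| ^ (r / p))
      atTop (nhds 0) := by
  have : (ENNReal.ofReal r).HolderConjugate r' :=
    ENNReal.holderConjugate_iff.2 (by simpa only [one_div] using hr')
  obtain ⟨C, hC⟩ := exists_lpNorm_le_of_forall_bddAbove ENNReal.ofReal_ne_top hu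
    fun g hg => (hweak g hg).abs.bddAbove_range
  exact tendsto_integral_abs_rpow_sub_rpow_sub_rpow hp.1 hp.2 hu hv hC hae

/-- Brezis–Lieb type lemma: if `uₙ ⇀ u` weakly in `L^r(Ω)` and `uₙ → u` a.e. in `Ω`,
then `|uₙ|^p − |uₙ − u|^p − |u|^p → 0` strongly in `L^{r/p}(Ω)` for any `p ∈ [1, r]`. -/
theorem brezis_lieb_type
    {N : ℕ} (hN : 1 ≤ N) (Ω : Set (EuclideanSpace ℝ (Fin N))) (hΩ : IsOpen Ω)
    (r p : ℝ) (hr : 1 ≤ r) (hp : p ∈ Set.Icc 1 r)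
    (u : ℕ → EuclideanSpace ℝ (Fin N) → ℝ) (v : EuclideanSpace ℝ (Fin N) → ℝ)
    (hu : ∀ n, MemLp (u n) (ENNReal.ofReal r) (volume.restrict Ω))
    (hv : MemLp v (ENNReal.ofReal r) (volume.restrict Ω))
    (r' : ℝ≥0∞) (hr' : 1 / ENNReal.ofReal r + 1 / r' = 1)
    (hweak : ∀ g : EuclideanSpace ℝ (Fin N) → ℝ, MemLp g r' (volume.restrict Ω) →
      Tendsto (fun n => ∫ x in Ω, u n x * g x) atTop (nhds (∫ x in Ω, v x * g x)))
    (hae : ∀ᵐ x ∂(volume.restrict Ω), Tendsto (fun n => u n x) atTop (nhds (v x))) :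
    Tendsto
      (fun n => ∫ x in Ω, |(|u n x| ^ p - |u n x - v x| ^ p - |v x| ^ p)| ^ (r / p))
      atTop (nhds 0) :=
  brezis_lieb_type_general Ω r p hp u v hu hv r' hr' hweak hae
end

section
/- Let 1 < q < 2 and let f ∈ L^{2/(2−q)}(ℝ³). Let (u_n) be a sequence in L²(ℝ³) with sup_n |u_n|_2 < ∞ and let u ∈ L²(ℝ³) be such that u_n → u strongly in L²(B_R(0)) for every R > 0. Then ∫_{ℝ³} f(x)|u_n|^q dx → ∫_{ℝ³} f(x)|u|^q dx as n → ∞. -/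
open MeasureTheory Filter Real
open scoped ENNReal Topology

/-!
Split `ℝ³` into a ball `B_R` and its complement. Off the ball, Hölder with exponents `2/(2-q)`
and `2/q` bounds `∫ f (|uₙ|^q - |u|^q)` by `‖f‖_{L^{2/(2-q)}(B_Rᶜ)}` times a bound on
`‖|uₙ|^q - |u|^q‖_{2/q}` that is uniform in `n`; the first factor is small for large `R` because
`2/(2-q) < ∞`. On the ball, the mean value bound
`||a|^q - |b|^q| ≤ q (|a|^(q-1) + |b|^(q-1)) |a - b|` and Hölder with exponents `2/(2-q)`,
`2/(q-1)` and `2` bound the contribution by a constant times `‖uₙ - u‖_{L²(B_R)} → 0`.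
-/

lemma rpow_sub_rpow_le_mul_rpow_sub_one {q a b : ℝ} (hq : 1 ≤ q) (hb : 0 ≤ b) (hba : b ≤ a) :
    a ^ q - b ^ q ≤ q * a ^ (q - 1) * (a - b) := by
  rcases hba.eq_or_lt with rfl | hlt
  · simp
  have hslope := (convexOn_rpow hq).slope_le_of_hasDerivAt hb (hb.trans hlt.le) hlt
    (Real.hasDerivAt_rpow_const (Or.inr hq))
  rwa [slope_def_field, div_le_iff₀ (sub_pos.2 hlt)] at hslope

lemma abs_abs_rpow_sub_abs_rpow_le {q : ℝ} (hq : 1 ≤ q) (a b : ℝ) :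
    |(|a| ^ q - |b| ^ q)| ≤ q * (|a| ^ (q - 1) + |b| ^ (q - 1)) * |a - b| := by
  wlog hba : |b| ≤ |a| generalizing a b
  · rw [abs_sub_comm, abs_sub_comm a, add_comm]
    exact this b a (le_of_not_ge hba)
  rw [abs_of_nonneg (sub_nonneg.2 (Real.rpow_le_rpow (abs_nonneg b) hba (by linarith)))]
  calc |a| ^ q - |b| ^ q ≤ q * |a| ^ (q - 1) * (|a| - |b|) :=
        rpow_sub_rpow_le_mul_rpow_sub_one hq (abs_nonneg b) hba
    _ ≤ q * (|a| ^ (q - 1) + |b| ^ (q - 1)) * |a - b| := by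
        gcongr
        · exact le_add_of_nonneg_right (Real.rpow_nonneg (abs_nonneg b) _)
        · exact abs_sub_abs_le_abs_sub a b

lemma holderTriple_ofReal_div {c a b : ℝ} (hc : 0 < c) (ha : 0 < a) (hb : 0 < b) :
    ENNReal.HolderTriple (ENNReal.ofReal (c / a)) (ENNReal.ofReal (c / b))
      (ENNReal.ofReal (c / (a + b))) := by
  constructor
  rw [← ENNReal.ofReal_inv_of_pos (by positivity), ← ENNReal.ofReal_inv_of_pos (by positivity),
    ← ENNReal.ofReal_inv_of_pos (by positivity),
    ← ENNReal.ofReal_add (by positivity) (by positivity), inv_div, inv_div, inv_div, add_div]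

lemma one_le_ofReal_div {a c : ℝ} (ha : 0 < a) (hac : a ≤ c) : 1 ≤ ENNReal.ofReal (c / a) := by
  rw [← ENNReal.ofReal_one]
  exact ENNReal.ofReal_le_ofReal ((one_le_div ha).2 hac)

section MeasureSpace

variable {α : Type*} [MeasurableSpace α] {μ : Measure α}

lemma MeasureTheory.AEStronglyMeasurable.abs_rpow {g : α → ℝ} (hg : AEStronglyMeasurable g μ)
    (c : ℝ) : AEStronglyMeasurable (fun x => |g x| ^ c) μ :=
  (hg.aemeasurable.abs.pow_const c).aestronglyMeasurable

lemma eLpNorm_abs_rpow (g : α → ℝ) {p c : ℝ} (hp : 0 ≤ p) (hc : 0 < c) :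
    eLpNorm (fun x => |g x| ^ c) (ENNReal.ofReal (p / c)) μ =
      eLpNorm g (ENNReal.ofReal p) μ ^ c := by
  simp_rw [← Real.norm_eq_abs]
  rw [eLpNorm_norm_rpow g hc, ← ENNReal.ofReal_mul (by positivity), div_mul_cancel₀ p hc.ne']

lemma MeasureTheory.MemLp.abs_rpow {g : α → ℝ} {p c : ℝ} (hg : MemLp g (ENNReal.ofReal p) μ)
    (hp : 0 ≤ p) (hc : 0 < c) : MemLp (fun x => |g x| ^ c) (ENNReal.ofReal (p / c)) μ :=
  ⟨hg.1.abs_rpow c, by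
    rw [eLpNorm_abs_rpow g hp hc]
    exact ENNReal.rpow_lt_top_of_nonneg hc.le hg.2.ne⟩

lemma eLpNorm_abs_rpow_sub_abs_rpow_le {q : ℝ} (hq0 : 0 < q) (hq2 : q ≤ 2) {a b : α → ℝ}
    (ha : AEStronglyMeasurable a μ) (hb : AEStronglyMeasurable b μ) :
    eLpNorm (fun x => |a x| ^ q - |b x| ^ q) (ENNReal.ofReal (2 / q)) μ ≤
      eLpNorm a 2 μ ^ q + eLpNorm b 2 μ ^ q := by
  refine (eLpNorm_sub_le (ha.abs_rpow _) (hb.abs_rpow _) (one_le_ofReal_div hq0 hq2)).trans_eq ?_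
  rw [eLpNorm_abs_rpow a zero_le_two hq0, eLpNorm_abs_rpow b zero_le_two hq0,
    ENNReal.ofReal_ofNat]

lemma eLpNorm_mul_abs_rpow_sub_abs_rpow_le {q : ℝ} (hq1 : 1 < q) (hq2 : q < 2) {f a b : α → ℝ}
    (hf : AEStronglyMeasurable f μ) (ha : AEStronglyMeasurable a μ)
    (hb : AEStronglyMeasurable b μ) :
    eLpNorm (fun x => f x * (|a x| ^ q - |b x| ^ q)) 1 μ ≤
      ENNReal.ofReal q * eLpNorm f (ENNReal.ofReal (2 / (2 - q))) μ *
        (eLpNorm a 2 μ ^ (q - 1) + eLpNorm b 2 μ ^ (q - 1)) * eLpNorm (a - b) 2 μ := by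
  let H : α → ℝ := fun x => |a x| ^ (q - 1) + |b x| ^ (q - 1)
  have hH : AEStronglyMeasurable H μ := (ha.abs_rpow _).add (hb.abs_rpow _)
  have : ENNReal.HolderTriple (ENNReal.ofReal (2 / (2 - q))) (ENNReal.ofReal (2 / (q - 1))) 2 := by
    convert holderTriple_ofReal_div two_pos (sub_pos.2 hq2) (sub_pos.2 hq1) using 1
    rw [show (2 : ℝ) / (2 - q + (q - 1)) = 2 by ring, ENNReal.ofReal_ofNat]
  have hpointwise : ∀ x, ‖f x * (|a x| ^ q - |b x| ^ q)‖ ≤ ‖((q • (f • H)) • (a - b)) x‖ := by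
    intro x
    have hHx : 0 ≤ H x := add_nonneg (by positivity) (by positivity)
    simp only [Real.norm_eq_abs, Pi.smul_apply, Pi.mul_apply, Pi.sub_apply, smul_eq_mul, abs_mul,
      abs_of_pos (zero_lt_one.trans hq1), abs_of_nonneg hHx]
    calc |f x| * |(|a x| ^ q - |b x| ^ q)| ≤ |f x| * (q * H x * |a x - b x|) := by
          gcongr; exact abs_abs_rpow_sub_abs_rpow_le hq1.le _ _
      _ = _ := by ring
  have hH_norm : eLpNorm H (ENNReal.ofReal (2 / (q - 1))) μ ≤
      eLpNorm a 2 μ ^ (q - 1) + eLpNorm b 2 μ ^ (q - 1) := by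
    refine (eLpNorm_add_le (ha.abs_rpow _) (hb.abs_rpow _)
      (one_le_ofReal_div (sub_pos.2 hq1) (by linarith))).trans_eq ?_
    rw [eLpNorm_abs_rpow a zero_le_two (sub_pos.2 hq1),
      eLpNorm_abs_rpow b zero_le_two (sub_pos.2 hq1), ENNReal.ofReal_ofNat]
  calc eLpNorm (fun x => f x * (|a x| ^ q - |b x| ^ q)) 1 μ
      ≤ eLpNorm ((q • (f • H)) • (a - b)) 1 μ := eLpNorm_mono hpointwise
    _ ≤ eLpNorm (q • (f • H)) 2 μ * eLpNorm (a - b) 2 μ :=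
        eLpNorm_smul_le_mul_eLpNorm (ha.sub hb) ((hf.smul hH).const_smul q)
    _ = ENNReal.ofReal q * eLpNorm (f • H) 2 μ * eLpNorm (a - b) 2 μ := by
        rw [eLpNorm_const_smul, Real.enorm_of_nonneg (zero_lt_one.trans hq1).le]
    _ ≤ ENNReal.ofReal q * (eLpNorm f (ENNReal.ofReal (2 / (2 - q))) μ *
          (eLpNorm a 2 μ ^ (q - 1) + eLpNorm b 2 μ ^ (q - 1))) * eLpNorm (a - b) 2 μ := by
        gcongr
        exact (eLpNorm_smul_le_mul_eLpNorm hH hf).trans (by gcongr)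
    _ = _ := by ring

lemma tendsto_eLpNorm_mul_abs_rpow_sub_abs_rpow {ι : Type*} {l : Filter ι} {q : ℝ} (hq1 : 1 < q)
    (hq2 : q < 2) {f : α → ℝ} (hf : MemLp f (ENNReal.ofReal (2 / (2 - q))) μ) {a : ι → α → ℝ}
    {b : α → ℝ} (ha : ∀ i, AEStronglyMeasurable (a i) μ) (hb : MemLp b 2 μ)
    (hab : Tendsto (fun i => eLpNorm (a i - b) 2 μ) l (𝓝 0)) :
    Tendsto (fun i => eLpNorm (fun x => f x * (|a i x| ^ q - |b x| ^ q)) 1 μ) l (𝓝 0) := by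
  set K := ENNReal.ofReal q * eLpNorm f (ENNReal.ofReal (2 / (2 - q))) μ *
    ((eLpNorm b 2 μ + 1) ^ (q - 1) + eLpNorm b 2 μ ^ (q - 1)) with hK_def
  have hK : K ≠ ∞ := by
    have := hf.2.ne
    have := hb.2.ne
    finiteness
  have ha_bound : ∀ᶠ i in l, eLpNorm (a i) 2 μ ≤ eLpNorm b 2 μ + 1 := by
    filter_upwards [ENNReal.tendsto_nhds_zero.1 hab 1 one_pos] with i hi
    calc eLpNorm (a i) 2 μ = eLpNorm (a i - b + b) 2 μ := by rw [sub_add_cancel]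
      _ ≤ eLpNorm (a i - b) 2 μ + eLpNorm b 2 μ :=
          eLpNorm_add_le ((ha i).sub hb.1) hb.1 one_le_two
      _ ≤ eLpNorm b 2 μ + 1 := by rw [add_comm]; gcongr
  have hlim : Tendsto (fun i => K * eLpNorm (a i - b) 2 μ) l (𝓝 0) := by
    simpa using ENNReal.Tendsto.const_mul hab (Or.inr hK)
  refine tendsto_of_tendsto_of_tendsto_of_le_of_le' tendsto_const_nhds hlim
    (Eventually.of_forall fun _ => zero_le) ?_
  filter_upwards [ha_bound] with i hi
  refine (eLpNorm_mul_abs_rpow_sub_abs_rpow_le hq1 hq2 hf.1 (ha i) hb.1).trans ?_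
  rw [hK_def]
  gcongr

lemma tendsto_eLpNorm_two_of_tendsto_integral_sq {ι : Type*} {l : Filter ι} {g : ι → α → ℝ}
    (hg : ∀ i, MemLp (g i) 2 μ) (h : Tendsto (fun i => ∫ x, |g i x| ^ 2 ∂μ) l (𝓝 0)) :
    Tendsto (fun i => eLpNorm (g i) 2 μ) l (𝓝 0) := by
  have heq : ∀ i, eLpNorm (g i) 2 μ = ENNReal.ofReal ((∫ x, |g i x| ^ 2 ∂μ) ^ (2 : ℝ)⁻¹) := by
    intro i
    rw [(hg i).eLpNorm_eq_integral_rpow_norm two_ne_zero ENNReal.ofNat_ne_top]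
    simp only [ENNReal.toReal_ofNat, Real.norm_eq_abs, Real.rpow_two]
  simp_rw [heq]
  have hcont : ContinuousAt (fun t : ℝ => ENNReal.ofReal (t ^ (2 : ℝ)⁻¹)) 0 :=
    ENNReal.continuous_ofReal.continuousAt.comp
      (Real.continuousAt_rpow_const _ _ (Or.inr (by norm_num)))
  simpa [Function.comp_def] using hcont.tendsto.comp h

end MeasureSpace

section MetricMeasureSpace

variable {α : Type*} [PseudoMetricSpace α] [MeasurableSpace α] [OpensMeasurableSpace α]
  {μ : Measure α}

lemma MeasureTheory.MemLp.tendsto_eLpNorm_restrict_compl_ball {E : Type*} [NormedAddCommGroup E]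
    {p : ℝ≥0∞} (hp : p ≠ ∞) {f : α → E} (hf : MemLp f p μ) (x₀ : α) :
    Tendsto (fun R : ℝ => eLpNorm f p (μ.restrict (Metric.ball x₀ R)ᶜ)) atTop (𝓝 0) := by
  rcases eq_or_ne p 0 with rfl | hp0
  · simp
  have hlintegral : Tendsto (fun R : ℝ => ∫⁻ x in (Metric.ball x₀ R)ᶜ, ‖f x‖ₑ ^ p.toReal ∂μ)
      atTop (𝓝 0) := by
    simp_rw [← lintegral_indicator Metric.isOpen_ball.measurableSet.compl]
    rw [← lintegral_zero]
    refine tendsto_lintegral_filter_of_dominated_convergence' (fun x => ‖f x‖ₑ ^ p.toReal)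
      (Eventually.of_forall fun R => ?_) (Eventually.of_forall fun R => ae_of_all _ ?_) ?_
      (ae_of_all _ fun x => ?_)
    · exact (hf.1.enorm.pow_const _).indicator Metric.isOpen_ball.measurableSet.compl
    · exact Set.indicator_le_self _ _
    · exact ((eLpNorm_lt_top_iff_lintegral_rpow_enorm_lt_top hp0 hp).1 hf.2).ne
    · refine tendsto_const_nhds.congr' ?_
      filter_upwards [eventually_gt_atTop (dist x x₀)] with R hR
      exact (Set.indicator_of_notMem (by simpa using hR) _).symm
  simp_rw [eLpNorm_eq_lintegral_rpow_enorm_toReal hp0 hp]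
  have hpos : 0 < 1 / p.toReal := one_div_pos.2 (ENNReal.toReal_pos hp0 hp)
  have := ((ENNReal.continuous_rpow_const (y := 1 / p.toReal)).tendsto 0).comp hlintegral
  rwa [ENNReal.zero_rpow_of_pos hpos] at this

lemma tendsto_eLpNorm_mul_of_tendsto_restrict_ball {ι : Type*} {l : Filter ι} {p r : ℝ≥0∞}
    [ENNReal.HolderTriple p r 1] (hp : p ≠ ∞) {f : α → ℝ} (hf : MemLp f p μ) {w : ι → α → ℝ}
    (hw : ∀ i, AEStronglyMeasurable (w i) μ) {M : ℝ≥0∞} (hM : M ≠ ∞)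
    (hwM : ∀ i, eLpNorm (w i) r μ ≤ M) (x₀ : α)
    (hloc : ∀ R : ℝ, 0 < R → Tendsto (fun i => eLpNorm (fun x => f x * w i x) 1
      (μ.restrict (Metric.ball x₀ R))) l (𝓝 0)) :
    Tendsto (fun i => eLpNorm (fun x => f x * w i x) 1 μ) l (𝓝 0) := by
  rw [ENNReal.tendsto_nhds_zero]
  intro ε hε
  have hε2 : 0 < ε / 2 := ENNReal.half_pos hε.ne'
  have htail : Tendsto (fun R : ℝ => eLpNorm f p (μ.restrict (Metric.ball x₀ R)ᶜ) * M)
      atTop (𝓝 0) := by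
    simpa using ENNReal.Tendsto.mul_const (hf.tendsto_eLpNorm_restrict_compl_ball hp x₀)
      (Or.inr hM)
  obtain ⟨R, hR0, hR⟩ :=
    ((eventually_gt_atTop 0).and (ENNReal.tendsto_nhds_zero.1 htail _ hε2)).exists
  filter_upwards [ENNReal.tendsto_nhds_zero.1 (hloc R hR0) _ hε2] with i hi
  set B := Metric.ball x₀ R
  calc eLpNorm (fun x => f x * w i x) 1 μ
      = eLpNorm (fun x => f x * w i x) 1 (μ.restrict B) +
          eLpNorm (fun x => f x * w i x) 1 (μ.restrict Bᶜ) := by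
        rw [← eLpNorm_one_add_measure,
          Measure.restrict_add_restrict_compl Metric.isOpen_ball.measurableSet]
    _ ≤ ε / 2 + eLpNorm f p (μ.restrict Bᶜ) * M := by
        refine add_le_add hi ((eLpNorm_smul_le_mul_eLpNorm (p := p) (q := r) (hw i).restrict
          hf.1.restrict).trans ?_)
        gcongr
        exact (eLpNorm_mono_measure _ Measure.restrict_le_self).trans (hwM i)
    _ ≤ ε / 2 + ε / 2 := by gcongr
    _ = ε := ENNReal.add_halves ε

end MetricMeasureSpace

/-- If `f ∈ L^{2/(2-q)}(ℝ³)`, `(uₙ)` is bounded in `L²(ℝ³)` and `uₙ → u` strongly in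
`L²(B_R(0))` for every `R > 0`, then `∫ f |uₙ|^q → ∫ f |u|^q`. -/
theorem tendsto_integral_f_abs_pow
    (q : ℝ) (hq1 : 1 < q) (hq2 : q < 2)
    (f : EuclideanSpace ℝ (Fin 3) → ℝ)
    (hf : MemLp f (ENNReal.ofReal (2 / (2 - q))) volume)
    (u : ℕ → EuclideanSpace ℝ (Fin 3) → ℝ) (v : EuclideanSpace ℝ (Fin 3) → ℝ)
    (hu : ∀ n, MemLp (u n) 2 volume) (hv : MemLp v 2 volume)
    (hbd : ∃ C : ℝ, ∀ n, eLpNorm (u n) 2 volume ≤ ENNReal.ofReal C)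
    (hconv : ∀ R : ℝ, 0 < R →
      Tendsto (fun n => ∫ x in Metric.ball (0 : EuclideanSpace ℝ (Fin 3)) R,
        |u n x - v x| ^ (2 : ℕ)) atTop (nhds 0)) :
    Tendsto (fun n => ∫ x, f x * |u n x| ^ q) atTop (nhds (∫ x, f x * |v x| ^ q)) := by
  obtain ⟨C, hC⟩ := hbd
  have hq0 : 0 < q := by linarith
  have : ENNReal.HolderTriple (ENNReal.ofReal (2 / (2 - q))) (ENNReal.ofReal (2 / q)) 1 := by
    convert holderTriple_ofReal_div two_pos (sub_pos.2 hq2) hq0 using 1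
    simp
  have hint (g) (hg : MemLp g 2 volume) : Integrable (fun x => f x * |g x| ^ q) volume :=
    memLp_one_iff_integrable.1
      ((MemLp.abs_rpow (by rwa [ENNReal.ofReal_ofNat]) zero_le_two hq0).mul' hf)
  have hw_bound (n) : eLpNorm (fun x => |u n x| ^ q - |v x| ^ q) (ENNReal.ofReal (2 / q)) volume ≤
      ENNReal.ofReal C ^ q + eLpNorm v 2 volume ^ q :=
    (eLpNorm_abs_rpow_sub_abs_rpow_le hq0 hq2.le (hu n).1 hv.1).trans (by gcongr; exact hC n)
  have hlocal (R : ℝ) (hR : 0 < R) := tendsto_eLpNorm_mul_abs_rpow_sub_abs_rpow hq1 hq2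
    (hf.restrict _) (fun n => (hu n).1.restrict) (hv.restrict _)
    (tendsto_eLpNorm_two_of_tendsto_integral_sq (fun n => ((hu n).sub hv).restrict _) (hconv R hR))
  refine tendsto_integral_of_L1' _ (hint v hv).1 (.of_forall fun n => hint (u n) (hu n)) ?_
  simp only [Pi.sub_def, ← mul_sub]
  exact tendsto_eLpNorm_mul_of_tendsto_restrict_ball ENNReal.ofReal_ne_top hf
    (fun n => ((hu n).1.abs_rpow q).sub (hv.1.abs_rpow q)) (by have := hv.2.ne; finiteness)
    hw_bound 0 hlocal
end

section
/- Let 1 < q < 2 and let f ∈ L^{2/(2−q)}(ℝ³). Let (u_n) be a sequence in L²(ℝ³) with sup_n |u_n|_2 < ∞ and let u ∈ L²(ℝ³) be such that u_n → u strongly in L²(B_R(0)) for every R > 0. Then for every smooth compactly supported function φ : ℝ³ → ℝ one has ∫_{ℝ³} f(x)|u_n|^{q−2}u_n φ dx → ∫_{ℝ³} f(x)|u|^{q−2}u φ dx as n → ∞, where |t|^{q−2}t is understood as |t|^{q−1}·sign(t) (equal to 0 at t = 0). -/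
open MeasureTheory Filter Real
open scoped ENNReal

private lemma measurable_realSign : Measurable Real.sign := by
  have h : Real.sign = fun r : ℝ => if r < 0 then (-1:ℝ) else if 0 < r then 1 else 0 := by
    funext r; rfl
  rw [h]
  exact Measurable.ite (measurableSet_lt measurable_id measurable_const) measurable_const
    (Measurable.ite (measurableSet_lt measurable_const measurable_id) measurable_const
      measurable_const)

private lemma abs_S_le (α a : ℝ) : |(|a| ^ α * Real.sign a)| ≤ |a| ^ α := by
  rw [abs_mul, abs_of_nonneg (Real.rpow_nonneg (abs_nonneg a) α)]
  have h1 : |Real.sign a| ≤ 1 := by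
    rcases Real.sign_apply_eq a with h | h | h <;> rw [h] <;> norm_num
  calc |a| ^ α * |Real.sign a| ≤ |a| ^ α * 1 :=
        mul_le_mul_of_nonneg_left h1 (Real.rpow_nonneg (abs_nonneg a) α)
    _ = |a| ^ α := mul_one _

private lemma S_of_nonneg {α a : ℝ} (hα : α ≠ 0) (ha : 0 ≤ a) :
    |a| ^ α * Real.sign a = a ^ α := by
  rcases ha.eq_or_lt with rfl | h
  · simp [Real.zero_rpow hα]
  · rw [Real.sign_of_pos h, abs_of_pos h, mul_one]

private lemma S_of_nonpos {α a : ℝ} (hα : α ≠ 0) (ha : a ≤ 0) :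
    |a| ^ α * Real.sign a = -((-a) ^ α) := by
  rcases ha.eq_or_lt with rfl | h
  · simp [Real.zero_rpow hα]
  · rw [Real.sign_of_neg h, abs_of_neg h, mul_neg_one]

private lemma rpow_subadd {α : ℝ} (hα0 : 0 ≤ α) (hα1 : α ≤ 1) {a b : ℝ} (ha : 0 ≤ a)
    (hb : 0 ≤ b) : (a + b) ^ α ≤ a ^ α + b ^ α := by
  have h := NNReal.coe_le_coe.2 (NNReal.rpow_add_le_add_rpow a.toNNReal b.toNNReal hα0 hα1)
  rw [NNReal.coe_add, NNReal.coe_rpow, NNReal.coe_rpow, NNReal.coe_rpow, NNReal.coe_add,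
    Real.coe_toNNReal _ ha, Real.coe_toNNReal _ hb] at h
  exact h

private lemma abs_rpow_sub_rpow {α : ℝ} (hα0 : 0 < α) (hα1 : α ≤ 1) :
    ∀ {a b : ℝ}, 0 ≤ a → 0 ≤ b → |a ^ α - b ^ α| ≤ |a - b| ^ α := by
  have key : ∀ a b : ℝ, 0 ≤ b → b ≤ a → a ^ α - b ^ α ≤ (a - b) ^ α := by
    intro a b hb hba
    have h := rpow_subadd hα0.le hα1 (sub_nonneg.2 hba) hb
    rw [sub_add_cancel] at h
    linarith
  intro a b ha hb
  rcases le_total b a with h | h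
  · rw [abs_of_nonneg (sub_nonneg.2 (Real.rpow_le_rpow hb h hα0.le)),
      abs_of_nonneg (sub_nonneg.2 h)]
    exact key a b hb h
  · rw [abs_sub_comm, abs_sub_comm a b,
      abs_of_nonneg (sub_nonneg.2 (Real.rpow_le_rpow ha h hα0.le)),
      abs_of_nonneg (sub_nonneg.2 h)]
    exact key b a ha h

private lemma S_holder {α : ℝ} (hα0 : 0 < α) (hα1 : α ≤ 1) (a b : ℝ) :
    |(|a| ^ α * Real.sign a - |b| ^ α * Real.sign b)| ≤ 2 * |a - b| ^ α := by
  have hα : α ≠ 0 := hα0.ne'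
  have habs : (0:ℝ) ≤ |a - b| ^ α := Real.rpow_nonneg (abs_nonneg _) α
  have mixed : ∀ x y : ℝ, 0 ≤ x → y ≤ 0 →
      |(|x| ^ α * Real.sign x - |y| ^ α * Real.sign y)| ≤ 2 * |x - y| ^ α := by
    intro x y hx hy
    rw [S_of_nonneg hα hx, S_of_nonpos hα hy, sub_neg_eq_add]
    have hxy : (0:ℝ) ≤ x - y := by linarith
    have h1 : x ^ α ≤ (x - y) ^ α := Real.rpow_le_rpow hx (by linarith) hα0.le
    have h2 : (-y) ^ α ≤ (x - y) ^ α := Real.rpow_le_rpow (by linarith) (by linarith) hα0.le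
    have hx' : (0:ℝ) ≤ x ^ α := Real.rpow_nonneg hx _
    have hy' : (0:ℝ) ≤ (-y) ^ α := Real.rpow_nonneg (by linarith) _
    rw [abs_of_nonneg (by linarith), abs_of_nonneg hxy]
    linarith
  rcases le_or_gt 0 a with ha | ha <;> rcases le_or_gt 0 b with hb | hb
  · rw [S_of_nonneg hα ha, S_of_nonneg hα hb]
    calc |a ^ α - b ^ α| ≤ |a - b| ^ α := abs_rpow_sub_rpow hα0 hα1 ha hb
      _ ≤ 2 * |a - b| ^ α := by linarith
  · exact mixed a b ha hb.le
  · rw [abs_sub_comm, abs_sub_comm a b] at *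
    exact mixed b a hb ha.le
  · rw [S_of_nonpos hα ha.le, S_of_nonpos hα hb.le]
    have h := abs_rpow_sub_rpow hα0 hα1 (a := -a) (b := -b) (by linarith) (by linarith)
    have e1 : |-((-a) ^ α) - -((-b) ^ α)| = |(-a) ^ α - (-b) ^ α| := by
      rw [← abs_neg]; ring_nf
    have e2 : |-a - -b| = |a - b| := by rw [← abs_neg]; ring_nf
    rw [e1]
    rw [e2] at h
    linarith

private abbrev E3 := EuclideanSpace ℝ (Fin 3)


private lemma holder_key {q : ℝ} (hq1 : 1 < q) (hq2 : q < 2)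
    {f w : E3 → ℝ} (hfm : AEMeasurable f (volume : Measure E3))
    (hwm : AEMeasurable w (volume : Measure E3)) {s : Set E3} (hs : MeasurableSet s) :
    ∫⁻ x in s, ENNReal.ofReal |f x| * ENNReal.ofReal |w x| ^ (q - 1) ∂volume
      ≤ (∫⁻ x, ENNReal.ofReal |f x| ^ (2 / (2 - q)) ∂volume) ^ ((2 - q) / 2)
        * ((volume s) ^ ((1:ℝ)/2)
          * (∫⁻ x in s, ENNReal.ofReal |w x| ^ (2:ℝ) ∂volume) ^ ((q - 1) / 2)) := by
  have h2q : (0:ℝ) < 2 - q := by linarith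
  have hq0 : (0:ℝ) < q := by linarith
  have hq1' : (0:ℝ) < q - 1 := by linarith
  have hpq : (2/(2-q)).HolderConjugate (2/q) := by
    constructor
    · rw [inv_div, inv_div, ← add_div]; norm_num
    · exact div_pos two_pos h2q
    · exact div_pos two_pos hq0
  have hpq2 : (q/(q-1)).HolderConjugate q := by
    constructor
    · rw [inv_div, inv_one, inv_eq_one_div, ← add_div, sub_add_cancel, div_self hq0.ne']
    · exact div_pos hq0 hq1'
    · exact hq0
  have hF : AEMeasurable (fun x => ENNReal.ofReal |f x|) (volume.restrict s) :=
    (ENNReal.measurable_ofReal.comp_aemeasurable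
      ((continuous_abs.measurable).comp_aemeasurable hfm)).restrict
  have hW : AEMeasurable (fun x => ENNReal.ofReal |w x|) (volume.restrict s) :=
    (ENNReal.measurable_ofReal.comp_aemeasurable
      ((continuous_abs.measurable).comp_aemeasurable hwm)).restrict
  have hG : AEMeasurable (fun x => ENNReal.ofReal |w x| ^ (q - 1)) (volume.restrict s) :=
    (ENNReal.continuous_rpow_const.measurable).comp_aemeasurable hW
  -- step 1: Hölder with exponents 2/(2-q), 2/q
  have step1 := ENNReal.lintegral_mul_le_Lp_mul_Lq (volume.restrict s) hpq hF hG
  simp only [Pi.mul_apply] at step1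
  rw [one_div_div, one_div_div] at step1
  -- step 2: Hölder with exponents q/(q-1), q for the w factor
  have hH : AEMeasurable (fun x => ENNReal.ofReal |w x| ^ ((q-1) * (2/q)))
      (volume.restrict s) :=
    (ENNReal.continuous_rpow_const.measurable).comp_aemeasurable hW
  have step2 := ENNReal.lintegral_mul_le_Lp_mul_Lq (volume.restrict s) hpq2 hH
    (aemeasurable_const (b := (1:ℝ≥0∞)))
  simp only [Pi.mul_apply, mul_one, ENNReal.one_rpow, lintegral_one,
    Measure.restrict_apply_univ, one_div_div] at step2
  rw [one_div] at step2
  have hexp1 : ∀ x : ℝ≥0∞, (x ^ (q-1)) ^ (2/q) = x ^ ((q-1) * (2/q)) := fun x =>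
    (ENNReal.rpow_mul x (q-1) (2/q)).symm
  have hexp2 : ∀ x : ℝ≥0∞, (x ^ ((q-1) * (2/q))) ^ (q/(q-1)) = x ^ (2:ℝ) := fun x => by
    rw [← ENNReal.rpow_mul]
    congr 1
    field_simp
  simp only [hexp2] at step2
  -- combine
  calc ∫⁻ x in s, ENNReal.ofReal |f x| * ENNReal.ofReal |w x| ^ (q - 1) ∂volume
      ≤ (∫⁻ x in s, ENNReal.ofReal |f x| ^ (2/(2-q)) ∂volume) ^ ((2-q)/2)
        * (∫⁻ x in s, (ENNReal.ofReal |w x| ^ (q-1)) ^ (2/q) ∂volume) ^ (q/2) := step1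
    _ ≤ (∫⁻ x, ENNReal.ofReal |f x| ^ (2/(2-q)) ∂volume) ^ ((2-q)/2)
        * (∫⁻ x in s, (ENNReal.ofReal |w x| ^ (q-1)) ^ (2/q) ∂volume) ^ (q/2) := by
        gcongr
        exact Measure.restrict_le_self
    _ ≤ (∫⁻ x, ENNReal.ofReal |f x| ^ (2/(2-q)) ∂volume) ^ ((2-q)/2)
        * ((volume s) ^ ((1:ℝ)/2)
          * (∫⁻ x in s, ENNReal.ofReal |w x| ^ (2:ℝ) ∂volume) ^ ((q - 1) / 2)) := by
        gcongr ?_ * ?_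
        · exact le_rfl
        · -- ((∫ |w|^((q-1)*(2/q)))^(q/2) ≤ μ(s)^(1/2) * (∫|w|^2)^((q-1)/2)
          simp only [hexp1]
          calc (∫⁻ x in s, ENNReal.ofReal |w x| ^ ((q-1) * (2/q)) ∂volume) ^ (q/2)
              ≤ ((∫⁻ x in s, ENNReal.ofReal |w x| ^ (2:ℝ) ∂volume) ^ ((q-1)/q)
                * (volume s) ^ (q:ℝ)⁻¹) ^ (q/2) := by
                gcongr
            _ = (volume s) ^ ((1:ℝ)/2)
                * (∫⁻ x in s, ENNReal.ofReal |w x| ^ (2:ℝ) ∂volume) ^ ((q - 1) / 2) := by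
                rw [ENNReal.mul_rpow_of_nonneg _ _ (by positivity : (0:ℝ) ≤ q/2),
                  ← ENNReal.rpow_mul, ← ENNReal.rpow_mul]
                have e1 : (q-1)/q * (q/2) = (q-1)/2 := by field_simp
                have e2 : (q:ℝ)⁻¹ * (q/2) = 1/2 := by field_simp
                rw [e1, e2, mul_comm]


private lemma lint_f_lt_top {q : ℝ} (hq1 : 1 < q) (hq2 : q < 2) {f : E3 → ℝ}
    (hf : MemLp f (ENNReal.ofReal (2 / (2 - q))) volume) :
    ∫⁻ x, ENNReal.ofReal |f x| ^ (2 / (2 - q)) ∂volume < ∞ := by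
  have h2q : (0:ℝ) < 2 - q := by linarith
  have hppos : (0:ℝ) < 2 / (2 - q) := by positivity
  have hp0 : ENNReal.ofReal (2 / (2 - q)) ≠ 0 := by
    simp [ENNReal.ofReal_eq_zero, not_le, hppos]
  have hptop : ENNReal.ofReal (2 / (2 - q)) ≠ ∞ := ENNReal.ofReal_ne_top
  have h := hf.2
  rw [eLpNorm_eq_lintegral_rpow_enorm_toReal hp0 hptop, ENNReal.toReal_ofReal hppos.le] at h
  have hbase := (ENNReal.rpow_lt_top_iff_of_pos (by positivity : (0:ℝ) < 1 / (2/(2-q)))).1 h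
  have : (fun x => ‖f x‖ₑ ^ (2/(2-q)))
      = fun x => ENNReal.ofReal |f x| ^ (2/(2-q)) := by
    funext x
    rw [← ofReal_norm_eq_enorm, Real.norm_eq_abs]
  rwa [this] at hbase

private lemma lint_w_sq_lt_top {w : E3 → ℝ} (hw : MemLp w 2 volume) (s : Set E3) :
    ∫⁻ x in s, ENNReal.ofReal |w x| ^ (2:ℝ) ∂volume < ∞ := by
  have h := hw.2
  rw [eLpNorm_eq_lintegral_rpow_enorm_toReal two_ne_zero ENNReal.ofNat_ne_top] at h
  have hbase := (ENNReal.rpow_lt_top_iff_of_pos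
    (by rw [ENNReal.toReal_ofNat]; norm_num : (0:ℝ) < 1 / (2:ℝ≥0∞).toReal)).1 h
  rw [ENNReal.toReal_ofNat] at hbase
  have heq : (fun x => ‖w x‖ₑ ^ (2:ℝ))
      = fun x => ENNReal.ofReal |w x| ^ (2:ℝ) := by
    funext x
    rw [← ofReal_norm_eq_enorm, Real.norm_eq_abs]
  rw [heq] at hbase
  exact lt_of_le_of_lt (setLIntegral_le_lintegral s _) hbase

private lemma lintegral_bound {G : E3 → ℝ} {H : E3 → ℝ≥0∞} {s : Set E3} (hs : MeasurableSet s)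
    (h0 : ∀ x ∉ s, G x = 0) (h1 : ∀ x ∈ s, ENNReal.ofReal |G x| ≤ H x) :
    ∫⁻ x, ENNReal.ofReal |G x| ∂volume ≤ ∫⁻ x in s, H x ∂volume := by
  have heq : ∀ x, ENNReal.ofReal |G x| = s.indicator (fun x => ENNReal.ofReal |G x|) x := by
    intro x
    by_cases hx : x ∈ s
    · rw [Set.indicator_of_mem hx]
    · rw [Set.indicator_of_notMem hx, h0 x hx]; simp
  calc ∫⁻ x, ENNReal.ofReal |G x| ∂volume
      = ∫⁻ x, s.indicator (fun x => ENNReal.ofReal |G x|) x ∂volume := by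
        exact lintegral_congr heq
    _ = ∫⁻ x in s, ENNReal.ofReal |G x| ∂volume := lintegral_indicator hs _
    _ ≤ ∫⁻ x in s, H x ∂volume := setLIntegral_mono' hs h1

private lemma integrable_term {q : ℝ} (hq1 : 1 < q) (hq2 : q < 2)
    {f w φ : E3 → ℝ}
    (hf : MemLp f (ENNReal.ofReal (2 / (2 - q))) volume)
    (hw : MemLp w 2 volume)
    (hφm : AEStronglyMeasurable φ (volume : Measure E3)) {R M : ℝ}
    (hM : ∀ x, |φ x| ≤ M)
    (h0 : ∀ x ∉ Metric.ball (0:E3) R, φ x = 0) :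
    Integrable (fun x => f x * (|w x| ^ (q - 1) * Real.sign (w x)) * φ x) volume := by
  have hα0 : (0:ℝ) < q - 1 := by linarith
  have hM0 : (0:ℝ) ≤ M := le_trans (abs_nonneg _) (hM 0)
  have hS : Measurable fun t : ℝ => |t| ^ (q-1) * Real.sign t :=
    ((Real.continuous_rpow_const hα0.le).comp continuous_abs).measurable.mul measurable_realSign
  have hwm : AEMeasurable w (volume : Measure E3) := hw.aestronglyMeasurable.aemeasurable
  have hfm : AEMeasurable f (volume : Measure E3) := hf.aestronglyMeasurable.aemeasurable
  constructor
  · exact (hf.aestronglyMeasurable.mul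
      (hS.comp_aemeasurable hwm).aestronglyMeasurable).mul hφm
  · rw [hasFiniteIntegral_iff_norm]
    have hbound : ∫⁻ x, ENNReal.ofReal ‖f x * (|w x| ^ (q - 1) * Real.sign (w x)) * φ x‖ ∂volume
        ≤ ∫⁻ x in Metric.ball (0:E3) R,
            ENNReal.ofReal M * (ENNReal.ofReal |f x| * ENNReal.ofReal |w x| ^ (q-1)) ∂volume := by
      simp only [Real.norm_eq_abs]
      refine lintegral_bound measurableSet_ball (fun x hx => by rw [h0 x hx, mul_zero]) ?_
      intro x _
      have habs : |f x * (|w x| ^ (q - 1) * Real.sign (w x)) * φ x|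
          ≤ M * (|f x| * |w x| ^ (q-1)) := by
        rw [abs_mul, abs_mul]
        have h1 := abs_S_le (q-1) (w x)
        have h2 := hM x
        have hb : |f x| * |(|w x| ^ (q - 1) * Real.sign (w x))| * |φ x|
            ≤ |f x| * (|w x| ^ (q-1)) * M := by
          gcongr
        calc |f x| * |(|w x| ^ (q - 1) * Real.sign (w x))| * |φ x|
            ≤ |f x| * (|w x| ^ (q-1)) * M := hb
          _ = M * (|f x| * |w x| ^ (q-1)) := by ring
      calc ENNReal.ofReal |f x * (|w x| ^ (q - 1) * Real.sign (w x)) * φ x|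
          ≤ ENNReal.ofReal (M * (|f x| * |w x| ^ (q-1))) := ENNReal.ofReal_le_ofReal habs
        _ = ENNReal.ofReal M * (ENNReal.ofReal |f x| * ENNReal.ofReal |w x| ^ (q-1)) := by
            rw [ENNReal.ofReal_mul hM0, ENNReal.ofReal_mul (abs_nonneg _),
              ENNReal.ofReal_rpow_of_nonneg (abs_nonneg _) hα0.le]
    refine lt_of_le_of_lt hbound ?_
    rw [lintegral_const_mul' _ _ ENNReal.ofReal_ne_top]
    have hkey := holder_key hq1 hq2 hfm hwm (s := Metric.ball (0:E3) R) measurableSet_ball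
    refine ENNReal.mul_lt_top ENNReal.ofReal_lt_top (lt_of_le_of_lt hkey ?_)
    exact ENNReal.mul_lt_top
      (ENNReal.rpow_lt_top_of_nonneg (by linarith) (lint_f_lt_top hq1 hq2 hf).ne)
      (ENNReal.mul_lt_top
        (ENNReal.rpow_lt_top_of_nonneg (by norm_num) measure_ball_lt_top.ne)
        (ENNReal.rpow_lt_top_of_nonneg (by linarith) (lint_w_sq_lt_top hw _).ne))

/-- If `f ∈ L^{2/(2-q)}(ℝ³)`, `(uₙ)` is bounded in `L²(ℝ³)` and `uₙ → u` strongly in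
`L²(B_R(0))` for every `R > 0`, then for every smooth compactly supported `φ`,
`∫ f |uₙ|^{q-2} uₙ φ → ∫ f |u|^{q-2} u φ`, where `|t|^{q-2} t := |t|^{q-1} sign t`. -/
theorem tendsto_integral_f_abs_pow_sign
    (q : ℝ) (hq1 : 1 < q) (hq2 : q < 2)
    (f : EuclideanSpace ℝ (Fin 3) → ℝ)
    (hf : MemLp f (ENNReal.ofReal (2 / (2 - q))) volume)
    (u : ℕ → EuclideanSpace ℝ (Fin 3) → ℝ) (v : EuclideanSpace ℝ (Fin 3) → ℝ)
    (hu : ∀ n, MemLp (u n) 2 volume) (hv : MemLp v 2 volume)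
    (hbd : ∃ C : ℝ, ∀ n, eLpNorm (u n) 2 volume ≤ ENNReal.ofReal C)
    (hconv : ∀ R : ℝ, 0 < R →
      Tendsto (fun n => ∫ x in Metric.ball (0 : EuclideanSpace ℝ (Fin 3)) R,
        |u n x - v x| ^ (2 : ℕ)) atTop (nhds 0))
    (φ : EuclideanSpace ℝ (Fin 3) → ℝ) (hφ : ContDiff ℝ (⊤ : ℕ∞) φ)
    (hφc : HasCompactSupport φ) :
    Tendsto (fun n => ∫ x, f x * (|u n x| ^ (q - 1) * Real.sign (u n x)) * φ x)
      atTop (nhds (∫ x, f x * (|v x| ^ (q - 1) * Real.sign (v x)) * φ x)) := by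
  have h2q : (0:ℝ) < 2 - q := by linarith
  have hα0 : (0:ℝ) < q - 1 := by linarith
  obtain ⟨M, hMn⟩ := hφc.exists_bound_of_continuous hφ.continuous
  have hM : ∀ x, |φ x| ≤ M := fun x => by simpa [Real.norm_eq_abs] using hMn x
  have hM0 : (0:ℝ) ≤ M := le_trans (abs_nonneg _) (hM 0)
  obtain ⟨R, hR0, hRsub⟩ := hφc.isBounded.subset_ball_lt 0 0
  have h0 : ∀ x ∉ Metric.ball (0 : EuclideanSpace ℝ (Fin 3)) R, φ x = 0 := fun x hx =>
    image_eq_zero_of_notMem_tsupport fun h => hx (hRsub h)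
  have hφm : AEStronglyMeasurable φ (volume : Measure E3) :=
    hφ.continuous.aestronglyMeasurable
  have hIntn : ∀ n,
      Integrable (fun x => f x * (|u n x| ^ (q - 1) * Real.sign (u n x)) * φ x) volume :=
    fun n => integrable_term hq1 hq2 hf (hu n) hφm hM h0
  have hIntv : Integrable (fun x => f x * (|v x| ^ (q - 1) * Real.sign (v x)) * φ x) volume :=
    integrable_term hq1 hq2 hf hv hφm hM h0
  set A : ℕ → ℝ≥0∞ := fun n =>
    ∫⁻ x in Metric.ball (0:E3) R,
      ENNReal.ofReal |f x| * ENNReal.ofReal |u n x - v x| ^ (q - 1) ∂volume with hAdef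
  set D : ℕ → ℝ≥0∞ := fun n =>
    ∫⁻ x in Metric.ball (0:E3) R, ENNReal.ofReal |u n x - v x| ^ (2:ℝ) ∂volume with hDdef
  set Cf : ℝ≥0∞ := (∫⁻ x, ENNReal.ofReal |f x| ^ (2 / (2 - q)) ∂volume) ^ ((2 - q) / 2)
    with hCfdef
  have hwm : ∀ n, AEMeasurable (fun x => u n x - v x) (volume : Measure E3) := fun n =>
    ((hu n).sub hv).aestronglyMeasurable.aemeasurable
  have hfm : AEMeasurable f (volume : Measure E3) := hf.aestronglyMeasurable.aemeasurable
  have hAbound : ∀ n, A n ≤ Cf * ((volume (Metric.ball (0:E3) R)) ^ ((1:ℝ)/2)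
      * D n ^ ((q - 1) / 2)) := fun n =>
    holder_key hq1 hq2 hfm (hwm n) measurableSet_ball
  have hCf_top : Cf ≠ ∞ :=
    (ENNReal.rpow_lt_top_of_nonneg (by linarith) (lint_f_lt_top hq1 hq2 hf).ne).ne
  have hvol_top : (volume (Metric.ball (0:E3) R)) ^ ((1:ℝ)/2) ≠ ∞ :=
    (ENNReal.rpow_lt_top_of_nonneg (by norm_num) measure_ball_lt_top.ne).ne
  have hD_top : ∀ n, D n ≠ ∞ := fun n => (lint_w_sq_lt_top ((hu n).sub hv) _).ne
  have hA_top : ∀ n, A n ≠ ∞ := fun n =>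
    ne_top_of_le_ne_top
      (ENNReal.mul_ne_top hCf_top (ENNReal.mul_ne_top hvol_top
        (ENNReal.rpow_lt_top_of_nonneg (by linarith) (hD_top n)).ne)) (hAbound n)
  have key : ∀ n,
      ‖(∫ x, f x * (|u n x| ^ (q - 1) * Real.sign (u n x)) * φ x)
        - ∫ x, f x * (|v x| ^ (q - 1) * Real.sign (v x)) * φ x‖
      ≤ (ENNReal.ofReal (2 * M) * A n).toReal := by
    intro n
    rw [← integral_sub (hIntn n) hIntv]
    refine le_trans (norm_integral_le_lintegral_norm _) ?_
    refine ENNReal.toReal_mono (ENNReal.mul_ne_top ENNReal.ofReal_ne_top (hA_top n)) ?_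
    simp only [hAdef]
    rw [← lintegral_const_mul' (ENNReal.ofReal (2*M)) _ ENNReal.ofReal_ne_top]
    simp only [Real.norm_eq_abs]
    refine lintegral_bound measurableSet_ball (fun x hx => by rw [h0 x hx]; ring) ?_
    intro x _
    have heq : f x * (|u n x| ^ (q - 1) * Real.sign (u n x)) * φ x
        - f x * (|v x| ^ (q - 1) * Real.sign (v x)) * φ x
        = f x * ((|u n x| ^ (q - 1) * Real.sign (u n x))
            - (|v x| ^ (q - 1) * Real.sign (v x))) * φ x := by ring
    have habs : |f x * (|u n x| ^ (q - 1) * Real.sign (u n x)) * φ x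
        - f x * (|v x| ^ (q - 1) * Real.sign (v x)) * φ x|
        ≤ (2*M) * (|f x| * |u n x - v x| ^ (q-1)) := by
      rw [heq, abs_mul, abs_mul]
      have h1 := S_holder hα0 (by linarith : q - 1 ≤ 1) (u n x) (v x)
      have h2 := hM x
      calc |f x| * |(|u n x| ^ (q - 1) * Real.sign (u n x))
              - (|v x| ^ (q - 1) * Real.sign (v x))| * |φ x|
          ≤ |f x| * (2 * |u n x - v x| ^ (q-1)) * M := by gcongr
        _ = (2*M) * (|f x| * |u n x - v x| ^ (q-1)) := by ring
    calc ENNReal.ofReal |f x * (|u n x| ^ (q - 1) * Real.sign (u n x)) * φ x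
          - f x * (|v x| ^ (q - 1) * Real.sign (v x)) * φ x|
        ≤ ENNReal.ofReal ((2*M) * (|f x| * |u n x - v x| ^ (q-1))) :=
          ENNReal.ofReal_le_ofReal habs
      _ = ENNReal.ofReal (2*M)
            * (ENNReal.ofReal |f x| * ENNReal.ofReal |u n x - v x| ^ (q-1)) := by
          rw [ENNReal.ofReal_mul (by positivity), ENNReal.ofReal_mul (abs_nonneg _),
            ENNReal.ofReal_rpow_of_nonneg (abs_nonneg _) hα0.le]
  have hD0 : Tendsto D atTop (nhds 0) := by
    have hDeq : ∀ n, D n = ENNReal.ofReal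
        (∫ x in Metric.ball (0:E3) R, |u n x - v x| ^ (2:ℕ) ∂volume) := by
      intro n
      have hm2 : MemLp (fun x => u n x - v x) 2 (volume.restrict (Metric.ball (0:E3) R)) :=
        ((hu n).sub hv).restrict _
      have hint : Integrable (fun x => |u n x - v x| ^ (2:ℕ))
          (volume.restrict (Metric.ball (0:E3) R)) := by
        have h := hm2.integrable_sq
        simpa [sq_abs] using h
      rw [MeasureTheory.ofReal_integral_eq_lintegral_ofReal hint
        (Eventually.of_forall fun x => by positivity)]
      simp only [hDdef]
      refine lintegral_congr fun x => ?_
      rw [← Real.rpow_natCast |u n x - v x| 2,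
        ENNReal.ofReal_rpow_of_nonneg (abs_nonneg _) (by norm_num)]
      norm_num
    rw [funext hDeq]
    have := ENNReal.tendsto_ofReal (hconv R hR0)
    simpa using this
  have hL : Tendsto (fun n => ENNReal.ofReal (2*M) * A n) atTop (nhds 0) := by
    have hDe : Tendsto (fun n => D n ^ ((q-1)/2)) atTop (nhds 0) := by
      have hc := (ENNReal.continuous_rpow_const (y := (q-1)/2)).tendsto 0
      have hcomp := hc.comp hD0
      simpa [Function.comp_def,
        ENNReal.zero_rpow_of_pos (by linarith : (0:ℝ) < (q-1)/2)] using hcomp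
    have hconst : (ENNReal.ofReal (2*M)
        * (Cf * (volume (Metric.ball (0:E3) R)) ^ ((1:ℝ)/2))) ≠ ∞ :=
      ENNReal.mul_ne_top ENNReal.ofReal_ne_top (ENNReal.mul_ne_top hCf_top hvol_top)
    have hLlim : Tendsto (fun n => (ENNReal.ofReal (2*M)
        * (Cf * (volume (Metric.ball (0:E3) R)) ^ ((1:ℝ)/2))) * D n ^ ((q-1)/2))
        atTop (nhds 0) := by
      have := ENNReal.Tendsto.const_mul hDe (Or.inr hconst)
      simpa using this
    refine tendsto_of_tendsto_of_tendsto_of_le_of_le tendsto_const_nhds hLlim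
      (fun n => zero_le) ?_
    intro n
    calc ENNReal.ofReal (2*M) * A n
        ≤ ENNReal.ofReal (2*M) * (Cf * ((volume (Metric.ball (0:E3) R)) ^ ((1:ℝ)/2)
            * D n ^ ((q-1)/2))) := by gcongr; exact hAbound n
      _ = (ENNReal.ofReal (2*M) * (Cf * (volume (Metric.ball (0:E3) R)) ^ ((1:ℝ)/2)))
            * D n ^ ((q-1)/2) := by ring
  have htoReal : Tendsto (fun n => (ENNReal.ofReal (2*M) * A n).toReal) atTop (nhds 0) := by
    have := (ENNReal.tendsto_toReal (by simp : (0:ℝ≥0∞) ≠ ∞)).comp hL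
    simpa [Function.comp_def] using this
  rw [tendsto_iff_norm_sub_tendsto_zero]
  exact squeeze_zero (fun n => norm_nonneg _) key htoReal
end

section
/- Let x₀ ∈ ℝ³, let K : ℝ³ → ℝ be continuous with 0 ≤ K(x) ≤ K(x₀) for all x ∈ ℝ³, and suppose there exist constants C > 0, δ > 0 and β ∈ [1, 3) such that |K(x) − K(x₀)| ≤ C|x − x₀|^β whenever |x − x₀| < δ. Then there exists a constant C' > 0 such that for every ε ∈ (0, 1], ∫_{ℝ³} (K(x₀) − K(x)) · ε³/(ε² + |x − x₀|²)³ dx ≤ C'·ε^β. -/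
open MeasureTheory Real

private lemma aux_g_integrable {β : ℝ} (hβ0 : 0 ≤ β) (hβ3 : β < 3) :
    Integrable (fun y : EuclideanSpace ℝ (Fin 3) =>
      ‖y‖ ^ β * (1 / (1 + ‖y‖ ^ (2 : ℕ)) ^ (3 : ℕ))) := by
  have hdim : (Module.finrank ℝ (EuclideanSpace ℝ (Fin 3)) : ℝ) = 3 := by
    simp [finrank_euclideanSpace_fin]
  have hint : Integrable (fun y : EuclideanSpace ℝ (Fin 3) => (1 + ‖y‖) ^ (-(6 - β))) :=
    integrable_one_add_norm (by rw [hdim]; linarith)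
  refine (hint.const_mul 8).mono' ?_ (Filter.Eventually.of_forall fun y => ?_)
  · apply Measurable.aestronglyMeasurable
    fun_prop
  · set t := ‖y‖ with ht
    have ht0 : 0 ≤ t := norm_nonneg y
    have h1 : (0:ℝ) < 1 + t ^ (2:ℕ) := by positivity
    have habs : |t ^ β * (1 / (1 + t ^ (2:ℕ)) ^ (3:ℕ))| = t ^ β * (1 / (1 + t ^ (2:ℕ)) ^ (3:ℕ)) := by
      apply abs_of_nonneg; positivity
    rw [Real.norm_eq_abs, habs]
    have key1 : t ^ β ≤ (1 + t) ^ β := Real.rpow_le_rpow ht0 (by linarith) hβ0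
    have key2 : (1 + t) ^ (6:ℕ) ≤ 8 * (1 + t ^ (2:ℕ)) ^ (3:ℕ) := by nlinarith [sq_nonneg (1 - t), sq_nonneg t, sq_nonneg (1 - t^2), sq_nonneg ((1-t)*t)]
    have h1t : (0:ℝ) < 1 + t := by linarith
    have hsplit : (1 + t) ^ (-(6 - β)) = (1 + t) ^ β / (1 + t) ^ (6:ℕ) := by
      rw [show -(6 - β) = β - 6 by ring, Real.rpow_sub h1t,
        show ((6:ℝ)) = ((6:ℕ):ℝ) by norm_num, Real.rpow_natCast]
    rw [hsplit]
    have hq : 1 / (1 + t ^ (2:ℕ)) ^ (3:ℕ) ≤ 8 / (1 + t) ^ (6:ℕ) := by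
      rw [div_le_div_iff₀ (by positivity) (by positivity)]
      linarith
    calc t ^ β * (1 / (1 + t ^ (2:ℕ)) ^ (3:ℕ))
        ≤ (1 + t) ^ β * (8 / (1 + t) ^ (6:ℕ)) := by
          apply mul_le_mul key1 hq (by positivity) (by positivity)
      _ = 8 * ((1 + t) ^ β / (1 + t) ^ (6:ℕ)) := by ring

/-- Estimate of `∫ (K(x₀) − K(x)) ε³/(ε² + |x − x₀|²)³ dx` under a local Hölder condition
on `K` at its maximum point `x₀`: the integral is `O(ε^β)`. -/
theorem K_difference_integral_estimate
    (x₀ : EuclideanSpace ℝ (Fin 3)) (K : EuclideanSpace ℝ (Fin 3) → ℝ)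
    (hKcont : Continuous K) (hK0 : ∀ x, 0 ≤ K x) (hKmax : ∀ x, K x ≤ K x₀)
    (C δ β : ℝ) (hC : 0 < C) (hδ : 0 < δ) (hβ1 : 1 ≤ β) (hβ3 : β < 3)
    (hHolder : ∀ x, dist x x₀ < δ → |K x - K x₀| ≤ C * dist x x₀ ^ β) :
    ∃ C' : ℝ, 0 < C' ∧ ∀ ε : ℝ, 0 < ε → ε ≤ 1 →
      ∫ x, (K x₀ - K x) * (ε ^ (3 : ℕ) / (ε ^ (2 : ℕ) + dist x x₀ ^ (2 : ℕ)) ^ (3 : ℕ)) ≤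
        C' * ε ^ β := by
  have hβ0 : (0:ℝ) ≤ β := by linarith
  set g : EuclideanSpace ℝ (Fin 3) → ℝ :=
    fun y => ‖y‖ ^ β * (1 / (1 + ‖y‖ ^ (2 : ℕ)) ^ (3 : ℕ)) with hg_def
  have hg : Integrable g := aux_g_integrable hβ0 hβ3
  set I : ℝ := ∫ y, g y with hI_def
  have hI0 : 0 ≤ I := integral_nonneg fun y => by positivity
  set C₁ : ℝ := C + K x₀ / δ ^ β with hC₁_def
  have hKx₀ : 0 ≤ K x₀ := hK0 x₀
  have hδβ : (0:ℝ) < δ ^ β := Real.rpow_pos_of_pos hδ β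
  have hC₁ : 0 < C₁ := by positivity
  -- pointwise bound on K
  have hKbound : ∀ x, K x₀ - K x ≤ C₁ * dist x x₀ ^ β := by
    intro x
    have hd0 : 0 ≤ dist x x₀ := dist_nonneg
    have hdβ : 0 ≤ dist x x₀ ^ β := Real.rpow_nonneg hd0 β
    by_cases hx : dist x x₀ < δ
    · have := hHolder x hx
      rw [abs_sub_comm, abs_of_nonneg (by linarith [hKmax x])] at this
      have : K x₀ - K x ≤ C * dist x x₀ ^ β := this
      have h2 : 0 ≤ K x₀ / δ ^ β * dist x x₀ ^ β := by positivity
      have h5 : C₁ * dist x x₀ ^ β = C * dist x x₀ ^ β + K x₀ / δ ^ β * dist x x₀ ^ β := by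
        rw [hC₁_def]; ring
      rw [h5]; linarith
    · push_neg at hx
      have hδd : δ ^ β ≤ dist x x₀ ^ β := Real.rpow_le_rpow hδ.le hx hβ0
      have h1 : K x₀ - K x ≤ K x₀ := by linarith [hK0 x]
      have h2 : K x₀ = K x₀ / δ ^ β * δ ^ β := by field_simp
      have h3 : K x₀ / δ ^ β * δ ^ β ≤ K x₀ / δ ^ β * dist x x₀ ^ β := by
        apply mul_le_mul_of_nonneg_left hδd (by positivity)
      have h4 : 0 ≤ C * dist x x₀ ^ β := by positivity
      have h5 : C₁ * dist x x₀ ^ β = C * dist x x₀ ^ β + K x₀ / δ ^ β * dist x x₀ ^ β := by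
        rw [hC₁_def]; ring
      rw [h5]; linarith
  refine ⟨C₁ * I + 1, by positivity, fun ε hε hε1 => ?_⟩
  have hεβ : 0 < ε ^ β := Real.rpow_pos_of_pos hε β
  -- scaled function F
  set F : EuclideanSpace ℝ (Fin 3) → ℝ :=
    fun z => ‖z‖ ^ β * (ε ^ (3:ℕ) / (ε ^ (2:ℕ) + ‖z‖ ^ (2:ℕ)) ^ (3:ℕ)) with hF_def
  have hFsmul : ∀ y, F (ε • y) = (ε ^ β * (ε ^ (3:ℕ))⁻¹) * g y := by
    intro y
    have hny : 0 ≤ ‖y‖ := norm_nonneg y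
    have h1 : ‖ε • y‖ = ε * ‖y‖ := by
      rw [norm_smul, Real.norm_eq_abs, abs_of_pos hε]
    simp only [hF_def, hg_def, h1]
    rw [Real.mul_rpow hε.le hny]
    have hden : (ε ^ (2:ℕ) + (ε * ‖y‖) ^ (2:ℕ)) ^ (3:ℕ)
        = ε ^ (6:ℕ) * (1 + ‖y‖ ^ (2:ℕ)) ^ (3:ℕ) := by ring
    rw [hden]
    have h2 : (0:ℝ) < (1 + ‖y‖ ^ (2:ℕ)) ^ (3:ℕ) := by positivity
    field_simp
  have hFint : Integrable F := by
    have h1 : Integrable (fun y => F (ε • y)) := by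
      have := hg.const_mul (ε ^ β * (ε ^ (3:ℕ))⁻¹)
      simpa only [← hFsmul] using this
    exact (integrable_comp_smul_iff volume F hε.ne').1 h1
  have hFval : ∫ z, F z = ε ^ β * I := by
    have h1 : ∫ y, F (ε • y) = (ε ^ Module.finrank ℝ (EuclideanSpace ℝ (Fin 3)))⁻¹ • ∫ z, F z :=
      Measure.integral_comp_smul_of_nonneg volume F ε (hR := hε.le)
    have h2 : ∫ y, F (ε • y) = (ε ^ β * (ε ^ (3:ℕ))⁻¹) * I := by
      simp only [hFsmul]
      rw [integral_const_mul]
    rw [h2, finrank_euclideanSpace_fin, smul_eq_mul] at h1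
    have hε3 : (ε:ℝ) ^ (3:ℕ) ≠ 0 := by positivity
    field_simp at h1 ⊢
    linarith [h1]
  -- translate: the bound integrand equals F (x - x₀)
  have hb_eq : ∀ x, dist x x₀ ^ β * (ε ^ (3:ℕ) / (ε ^ (2:ℕ) + dist x x₀ ^ (2:ℕ)) ^ (3:ℕ))
      = F (x - x₀) := by
    intro x
    simp only [hF_def, dist_eq_norm]
  have hbint : Integrable (fun x => F (x - x₀)) := hFint.comp_sub_right x₀
  have hbval : ∫ x, F (x - x₀) = ε ^ β * I := by
    rw [integral_sub_right_eq_self F x₀, hFval]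
  -- integrability of the original integrand
  have hq0 : ∀ x : EuclideanSpace ℝ (Fin 3),
      0 ≤ ε ^ (3:ℕ) / (ε ^ (2:ℕ) + dist x x₀ ^ (2:ℕ)) ^ (3:ℕ) := fun x => by positivity
  have hptwise : ∀ x, (K x₀ - K x) * (ε ^ (3:ℕ) / (ε ^ (2:ℕ) + dist x x₀ ^ (2:ℕ)) ^ (3:ℕ))
      ≤ C₁ * F (x - x₀) := by
    intro x
    rw [← hb_eq x, ← mul_assoc]
    exact mul_le_mul_of_nonneg_right (hKbound x) (hq0 x)
  have hfnonneg : ∀ x, 0 ≤ (K x₀ - K x) * (ε ^ (3:ℕ) / (ε ^ (2:ℕ) + dist x x₀ ^ (2:ℕ)) ^ (3:ℕ)) := by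
    intro x
    apply mul_nonneg _ (hq0 x)
    linarith [hKmax x]
  have hfint : Integrable (fun x => (K x₀ - K x) *
      (ε ^ (3:ℕ) / (ε ^ (2:ℕ) + dist x x₀ ^ (2:ℕ)) ^ (3:ℕ))) := by
    refine (hbint.const_mul C₁).mono' ?_ (Filter.Eventually.of_forall fun x => ?_)
    · apply Continuous.aestronglyMeasurable
      apply Continuous.mul (continuous_const.sub hKcont)
      apply Continuous.div continuous_const
      · fun_prop
      · intro x; positivity
    · rw [Real.norm_eq_abs, abs_of_nonneg (hfnonneg x)]
      exact hptwise x
  calc ∫ x, (K x₀ - K x) * (ε ^ (3:ℕ) / (ε ^ (2:ℕ) + dist x x₀ ^ (2:ℕ)) ^ (3:ℕ))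
      ≤ ∫ x, C₁ * F (x - x₀) := integral_mono hfint (hbint.const_mul C₁) hptwise
    _ = C₁ * (ε ^ β * I) := by rw [integral_const_mul, hbval]
    _ ≤ (C₁ * I + 1) * ε ^ β := by nlinarith
end

section
/- Let x₀ ∈ ℝ³, ε > 0, and let φ : ℝ³ → ℝ be measurable with 0 ≤ φ(x) ≤ 1 for all x and φ(x) = 0 whenever |x − x₀| ≥ 2. Define v_{ε,x₀}(x) = φ(x)·(3ε²)^{1/4}/(ε² + |x − x₀|²)^{1/2}. Then ∫_{ℝ³} v_{ε,x₀}(x)² dx ≤ 8√3·π·ε. -/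
/-!
Since `0 ≤ φ ≤ 1` vanishes off `B₂(x₀)`, `v² ≤ √3 ε (ε² + |x - x₀|²)⁻¹` on that ball and `v = 0`
outside. In polar coordinates about `x₀` the ball integral of `(ε² + r²)⁻¹` is
`4π ∫₀² r² (ε² + r²)⁻¹ dr ≤ 4π · 2`, as the radial weight `r²` cancels the singularity.
-/

open MeasureTheory Real Metric Set

section Radial

variable {E : Type*} [NormedAddCommGroup E] [NormedSpace ℝ E] [FiniteDimensional ℝ E]
  [Nontrivial E] [MeasurableSpace E] [BorelSpace E] (μ : Measure E) [μ.IsAddHaarMeasure]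

theorem setIntegral_ball_comp_dist (x₀ : E) (R : ℝ) (f : ℝ → ℝ) :
    ∫ x in ball x₀ R, f (dist x x₀) ∂μ =
      Module.finrank ℝ E • μ.real (ball 0 1) •
        ∫ r in Ioo 0 R, r ^ (Module.finrank ℝ E - 1) • f r := by
  have hcomp : (ball x₀ R).indicator (fun x => f (dist x x₀)) =
      fun x => (Iio R).indicator f ‖x - x₀‖ := by
    ext x
    simp only [indicator, mem_ball, mem_Iio, dist_eq_norm]
  have hradial : (fun r : ℝ => r ^ (Module.finrank ℝ E - 1) • (Iio R).indicator f r) =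
      (Iio R).indicator fun r => r ^ (Module.finrank ℝ E - 1) • f r := by
    ext r
    simp only [indicator]
    split_ifs <;> simp
  rw [← integral_indicator measurableSet_ball, hcomp,
    integral_sub_right_eq_self (fun y => (Iio R).indicator f ‖y‖) x₀,
    integral_fun_norm_addHaar μ, hradial, setIntegral_indicator measurableSet_Iio, Ioi_inter_Iio]

end Radial

theorem setIntegral_Ioo_sq_mul_inv_sq_add_sq_le (ε : ℝ) {R : ℝ} (hR : 0 ≤ R) :
    ∫ r in Ioo 0 R, r ^ 2 * (ε ^ 2 + r ^ 2)⁻¹ ≤ R := by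
  have hle : ∀ r ∈ Ioo 0 R, r ^ 2 * (ε ^ 2 + r ^ 2)⁻¹ ≤ 1 := fun r hr => by
    rw [← div_eq_mul_inv, div_le_one (by positivity [hr.1])]
    linarith [sq_nonneg ε]
  calc ∫ r in Ioo 0 R, r ^ 2 * (ε ^ 2 + r ^ 2)⁻¹
      ≤ ∫ _ in Ioo 0 R, (1 : ℝ) :=
        integral_mono_of_nonneg (Filter.Eventually.of_forall fun r => by positivity)
          (integrable_const 1) ((ae_restrict_iff' measurableSet_Ioo).2 (.of_forall hle))
    _ = R := by simp [hR]

theorem setIntegral_ball_inv_sq_add_dist_sq_le (x₀ : EuclideanSpace ℝ (Fin 3)) (ε : ℝ)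
    {R : ℝ} (hR : 0 ≤ R) :
    ∫ x in ball x₀ R, (ε ^ 2 + dist x x₀ ^ 2)⁻¹ ≤ 4 * π * R := by
  have hball : (ENNReal.ofReal 1 ^ 3 * ENNReal.ofReal (π * 4 / 3)).toReal = π * 4 / 3 := by
    simpa using ENNReal.toReal_ofReal (by positivity)
  rw [setIntegral_ball_comp_dist volume x₀ R fun r => (ε ^ 2 + r ^ 2)⁻¹]
  simp only [finrank_euclideanSpace_fin, measureReal_def, EuclideanSpace.volume_ball_fin_three,
    hball, nsmul_eq_mul, smul_eq_mul, Nat.cast_ofNat, Nat.add_one_sub_one]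
  nlinarith [pi_pos, setIntegral_Ioo_sq_mul_inv_sq_add_sq_le ε hR]

theorem sq_mul_rpow_div_rpow (t a b : ℝ) (ha : 0 ≤ a) (hb : 0 ≤ b) :
    (t * (a ^ ((1 : ℝ) / 4) / b ^ ((1 : ℝ) / 2))) ^ 2 = t ^ 2 * (√a / b) := by
  have hquarter : (a ^ ((1 : ℝ) / 4)) ^ 2 = √a := by
    rw [← rpow_natCast, ← rpow_mul ha, sqrt_eq_rpow]; norm_num
  rw [mul_pow, div_pow, hquarter, ← sqrt_eq_rpow, sq_sqrt hb]

theorem cutoff_talenti_L2_estimate_general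
    (x₀ : EuclideanSpace ℝ (Fin 3)) (ε : ℝ) (hε : 0 < ε)
    (φ : EuclideanSpace ℝ (Fin 3) → ℝ)
    (hφ0 : ∀ x, 0 ≤ φ x) (hφ1 : ∀ x, φ x ≤ 1)
    (hφsupp : ∀ x, 2 ≤ dist x x₀ → φ x = 0) :
    ∫ x, (φ x * ((3 * ε ^ (2 : ℕ)) ^ ((1 : ℝ) / 4) /
          (ε ^ (2 : ℕ) + dist x x₀ ^ (2 : ℕ)) ^ ((1 : ℝ) / 2))) ^ (2 : ℕ) ≤
      8 * Real.sqrt 3 * Real.pi * ε := by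
  set U : EuclideanSpace ℝ (Fin 3) → ℝ := fun x => √3 * ε * (ε ^ 2 + dist x x₀ ^ 2)⁻¹
  have hU_int : IntegrableOn U (ball x₀ 2) :=
    ((Continuous.continuousOn (by fun_prop (disch := intro x; positivity))).integrableOn_compact
      (isCompact_closedBall x₀ 2)).mono_set ball_subset_closedBall
  have hv_le : ∀ x, (φ x * ((3 * ε ^ (2 : ℕ)) ^ ((1 : ℝ) / 4) /
      (ε ^ (2 : ℕ) + dist x x₀ ^ (2 : ℕ)) ^ ((1 : ℝ) / 2))) ^ (2 : ℕ) ≤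
        (ball x₀ 2).indicator U x := by
    intro x
    rw [sq_mul_rpow_div_rpow _ _ _ (by positivity) (by positivity), sqrt_mul zero_le_three,
      sqrt_sq hε.le, ← mul_one_div, one_div]
    by_cases hx : x ∈ ball x₀ 2
    · rw [indicator_of_mem hx]
      exact mul_le_of_le_one_left (by positivity) (pow_le_one₀ (hφ0 x) (hφ1 x))
    · rw [indicator_of_notMem hx, hφsupp x (not_lt.1 hx)]
      simp
  calc _ ≤ ∫ x, (ball x₀ 2).indicator U x :=
        integral_mono_of_nonneg (.of_forall fun x => sq_nonneg _)
          ((integrable_indicator_iff measurableSet_ball).2 hU_int) (.of_forall hv_le)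
    _ = ∫ x in ball x₀ 2, U x := integral_indicator measurableSet_ball
    _ = √3 * ε * ∫ x in ball x₀ 2, (ε ^ 2 + dist x x₀ ^ 2)⁻¹ := integral_const_mul _ _
    _ ≤ √3 * ε * (4 * π * 2) := by
        gcongr
        exact setIntegral_ball_inv_sq_add_dist_sq_le x₀ ε zero_le_two
    _ = 8 * √3 * π * ε := by ring

/-- `L²`-estimate for the cut-off Aubin–Talenti function: if `0 ≤ φ ≤ 1` vanishes outside
`B₂(x₀)` and `v(x) = φ(x) (3ε²)^{1/4}/(ε² + |x−x₀|²)^{1/2}`, then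
`∫ v² ≤ 8√3 π ε`. -/
theorem cutoff_talenti_L2_estimate
    (x₀ : EuclideanSpace ℝ (Fin 3)) (ε : ℝ) (hε : 0 < ε)
    (φ : EuclideanSpace ℝ (Fin 3) → ℝ) (hφmeas : Measurable φ)
    (hφ0 : ∀ x, 0 ≤ φ x) (hφ1 : ∀ x, φ x ≤ 1)
    (hφsupp : ∀ x, 2 ≤ dist x x₀ → φ x = 0) :
    ∫ x, (φ x * ((3 * ε ^ (2 : ℕ)) ^ ((1 : ℝ) / 4) /
          (ε ^ (2 : ℕ) + dist x x₀ ^ (2 : ℕ)) ^ ((1 : ℝ) / 2))) ^ (2 : ℕ) ≤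
      8 * Real.sqrt 3 * Real.pi * ε :=
  cutoff_talenti_L2_estimate_general x₀ ε hε φ hφ0 hφ1 hφsupp
end
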